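/- arXiv:2002.11937 — 9 statements merged into one kernel-verified Lean document; each statement's English description precedes it below -/
import Mathlib

section
/- Let N ≥ 2 be an integer and define a sequence d : ℤ≥-3 → ℤ by d(-3)=d(-2)=d(-1)=0, d(0)=1, and d(t+1) = N·d(t) − N·d(t−2) + d(t−3) for t ≥ 0. Then for all t ≥ 0, d(t) − N·d(t−1) + d(t−2) equals 1 if t is even and 0 if t is odd. -/
/-- For the degree sequence `d` with `d(-3)=d(-2)=d(-1)=0`, `d(0)=1` and
`d(t+1) = N·d(t) − N·d(t−2) + d(t−3)` for `t ≥ 0` (with `N ≥ 2`), one has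
`d(t) − N·d(t−1) + d(t−2) = 1` if `t` is even and `= 0` if `t` is odd, for all `t ≥ 0`. -/
theorem stmt0 (N : ℤ) (hN : 2 ≤ N) (d : ℤ → ℤ)
    (h3 : d (-3) = 0) (h2 : d (-2) = 0) (h1 : d (-1) = 0) (h0 : d 0 = 1)
    (hrec : ∀ t : ℤ, 0 ≤ t → d (t + 1) = N * d t - N * d (t - 2) + d (t - 3)) :
    ∀ t : ℤ, 0 ≤ t →
      d t - N * d (t - 1) + d (t - 2) = if Even t then 1 else 0 := by
  have key : ∀ n : ℕ, d n - N * d ((n : ℤ) - 1) + d ((n : ℤ) - 2)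
      = if Even (n : ℤ) then 1 else 0 := by
    intro n
    induction n using Nat.strong_induction_on with
    | _ n ih =>
      match n with
      | 0 => norm_num [h0, h1, h2]
      | 1 =>
        have hr := hrec 0 le_rfl
        norm_num [h1, h2, h3] at hr
        have : ¬ Even ((1 : ℕ) : ℤ) := by decide
        simp only [this, if_false]
        push_cast
        norm_num [hr, h0, h1]
      | (n + 2) =>
        have hr := hrec ((n : ℤ) + 1) (by positivity)
        have ih' := ih n (by omega)
        have e1 : (((n + 2 : ℕ) : ℤ)) = (n : ℤ) + 1 + 1 := by push_cast; ring
        have e2 : (((n + 2 : ℕ) : ℤ)) - 1 = (n : ℤ) + 1 := by push_cast; ring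
        have e3 : (((n + 2 : ℕ) : ℤ)) - 2 = (n : ℤ) := by push_cast; ring
        have e4 : ((n : ℤ) + 1) - 2 = (n : ℤ) - 1 := by ring
        have e5 : ((n : ℤ) + 1) - 3 = (n : ℤ) - 2 := by ring
        rw [e4, e5] at hr
        rw [e2, e3, e1, hr]
        simp only [show Even ((n:ℤ)+1+1) ↔ Even (n:ℤ) from by
          rw [Int.even_add_one, Int.even_add_one, not_not]]
        rw [← ih']
        ring
  intro t ht
  obtain ⟨n, rfl⟩ := Int.eq_ofNat_of_zero_le ht
  exact key n
end

section
/- Let N ≥ 2 be an integer and define d : ℤ≥-3 → ℤ by d(-3)=d(-2)=d(-1)=0, d(0)=1, and d(t+1) = N·d(t) − N·d(t−2) + d(t−3) for t ≥ 0. Then d(t+1) ≥ (N−1)·d(t) for all t ≥ 0, and in particular d is strictly increasing on t ≥ 0. -/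
/-- For the degree sequence `d` (with `N ≥ 2`), one has
`d(t+1) ≥ (N−1)·d(t)` for all `t ≥ 0`, and `d` is strictly increasing on `t ≥ 0`. -/
theorem stmt1 (N : ℤ) (hN : 2 ≤ N) (d : ℤ → ℤ)
    (h3 : d (-3) = 0) (h2 : d (-2) = 0) (h1 : d (-1) = 0) (h0 : d 0 = 1)
    (hrec : ∀ t : ℤ, 0 ≤ t → d (t + 1) = N * d t - N * d (t - 2) + d (t - 3)) :
    (∀ t : ℤ, 0 ≤ t → (N - 1) * d t ≤ d (t + 1)) ∧
      (∀ s t : ℤ, 0 ≤ s → s < t → d s < d t) := by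
  -- the simpler two-term recurrence with alternating correction
  have hE : ∀ n : ℕ, d ((n : ℤ) + 1) - N * d n + d ((n : ℤ) - 1) =
      if Even n then 0 else 1 := by
    intro n
    induction n using Nat.strong_induction_on with
    | _ n ih =>
      match n with
      | 0 =>
        have h := hrec 0 le_rfl
        norm_num [h0, h2, h3] at h
        simp [h, h0, h1]
      | 1 =>
        have h := hrec 1 one_pos.le
        norm_num [h1, h2] at h
        simp [h, h0]
      | (n + 2) =>
        have h := hrec ((n : ℤ) + 2) (by positivity)
        have key := ih n (by omega)
        have e1 : ((n : ℤ) + 2) - 2 = (n : ℤ) := by ring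
        have e2 : ((n : ℤ) + 2) - 3 = (n : ℤ) - 1 := by ring
        rw [e1, e2] at h
        have : Even (n + 2) ↔ Even n := by simp [Nat.even_add]
        push_cast
        rw [show (n : ℤ) + 2 + 1 = ((n : ℤ) + 2) + 1 by ring, h,
          show (n : ℤ) + 2 - 1 = (n : ℤ) + 1 by ring]
        rw [if_congr this rfl rfl] at *
        linarith [key]
  have hEnn : ∀ n : ℕ, (0 : ℤ) ≤ if Even n then (0 : ℤ) else 1 := by
    intro n; split <;> norm_num
  -- positivity and strict increase on naturals
  have hP : ∀ n : ℕ, 0 ≤ d n ∧ d n < d ((n : ℤ) + 1) := by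
    intro n
    induction n with
    | zero =>
      have h := hrec 0 le_rfl
      norm_num [h0, h2, h3] at h
      norm_num [h0, h]
      omega
    | succ n ih =>
      obtain ⟨hn0, hlt⟩ := ih
      have hE' := hE (n + 1)
      have hEnn' := hEnn (n + 1)
      push_cast at hE' ⊢
      have hd1 : 0 ≤ d ((n : ℤ) + 1) := by linarith
      constructor
      · exact hd1
      · have hsub : (n : ℤ) + 1 - 1 = n := by ring
        rw [hsub] at hE'
        nlinarith [hd1, hlt]
  -- d(m-1) ≤ d(m) for m : ℕ
  have hmono1 : ∀ n : ℕ, d ((n : ℤ) - 1) ≤ d n := by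
    intro n
    match n with
    | 0 => simp [h0, h1]
    | (m + 1) =>
      have := (hP m).2
      push_cast
      have e : (m : ℤ) + 1 - 1 = m := by ring
      rw [e]
      linarith
  constructor
  · intro t ht
    obtain ⟨n, rfl⟩ := Int.eq_ofNat_of_zero_le ht
    have hE' := hE n
    have hEnn' := hEnn n
    have := hmono1 n
    linarith
  · intro s t hs hst
    obtain ⟨a, rfl⟩ := Int.eq_ofNat_of_zero_le hs
    obtain ⟨k, hk⟩ := Int.eq_ofNat_of_zero_le (by omega : (0:ℤ) ≤ t - (a:ℤ) - 1)
    have ht : t = (a : ℤ) + k + 1 := by omega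
    subst ht
    clear hst hk
    induction k with
    | zero =>
      have := (hP a).2
      simpa using this
    | succ k ih =>
      have h1 := (hP (a + k + 1)).2
      push_cast at h1 ⊢
      have e : (a : ℤ) + (k + 1) + 1 = (a : ℤ) + k + 1 + 1 := by ring
      rw [e]
      linarith
end

section
/- Let N ≥ 4 be an integer and define d : ℤ≥-3 → ℤ by d(-3)=d(-2)=d(-1)=0, d(0)=1, and d(t+1) = N·d(t) − N·d(t−2) + d(t−3) for t ≥ 0. Then for all t ≥ 5 and all r with 1 ≤ r ≤ t−1, one has d(t) > d(0) + d(r). -/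
/-- For the degree sequence `d` (with `N ≥ 4`), for all `t ≥ 5` and
all `r` with `1 ≤ r ≤ t−1`, one has `d(t) > d(0) + d(r)`. -/
theorem stmt2 (N : ℤ) (hN : 4 ≤ N) (d : ℤ → ℤ)
    (h3 : d (-3) = 0) (h2 : d (-2) = 0) (h1 : d (-1) = 0) (h0 : d 0 = 1)
    (hrec : ∀ t : ℤ, 0 ≤ t → d (t + 1) = N * d t - N * d (t - 2) + d (t - 3)) :
    ∀ t : ℤ, 5 ≤ t → ∀ r : ℤ, 1 ≤ r → r ≤ t - 1 → d 0 + d r < d t := by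
  have hd1 : d 1 = N := by
    have h := hrec 0 (by norm_num)
    norm_num [h0, h2, h3] at h
    linarith
  have hd2 : d 2 = N * N := by
    have h := hrec 1 (by norm_num)
    norm_num [h1, h2, hd1] at h
    linarith
  have hd3 : d 3 = N * N * N - N := by
    have h := hrec 2 (by norm_num)
    norm_num [h0, h1, hd2] at h
    linarith
  -- packed invariant
  have key : ∀ t : ℤ, 0 ≤ t →
      0 ≤ d t ∧ 0 ≤ d (t + 1) ∧ 2 * d t + 1 ≤ d (t + 1) ∧
      2 * d (t + 1) + 1 ≤ d (t + 2) ∧ 2 * d (t + 2) + 1 ≤ d (t + 3) := by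
    refine Int.le_induction ?_ ?_
    · norm_num [h0, hd1, hd2, hd3]
      refine ⟨by nlinarith, by nlinarith, by nlinarith, by nlinarith⟩
    · intro t ht ih
      obtain ⟨hn0, hn1, g1, g2, g3⟩ := ih
      have hn2 : 0 ≤ d (t + 2) := by linarith
      have hn3 : 0 ≤ d (t + 3) := by linarith
      have h := hrec (t + 3) (by linarith)
      have e1 : t + 3 + 1 = t + 1 + 3 := by ring
      have e2 : t + 3 - 2 = t + 1 := by ring
      have e3 : t + 3 - 3 = t := by ring
      rw [e1, e2, e3] at h
      have e4 : t + 1 + 1 = t + 2 := by ring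
      have e5 : t + 1 + 2 = t + 3 := by ring
      rw [e4, e5]
      refine ⟨hn1, hn2, g2, g3, ?_⟩
      nlinarith [mul_nonneg (by linarith : (0:ℤ) ≤ N - 2) hn1]
  have gap : ∀ t : ℤ, 0 ≤ t → 2 * d t + 1 ≤ d (t + 1) := fun t ht => (key t ht).2.2.1
  have nonneg : ∀ t : ℤ, 0 ≤ t → 0 ≤ d t := fun t ht => (key t ht).1
  have mono : ∀ a : ℤ, 0 ≤ a → ∀ b : ℤ, a ≤ b → d a ≤ d b := by
    intro a ha
    refine Int.le_induction ?_ ?_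
    · exact le_refl _
    · intro b hab ih
      have := gap b (by linarith)
      have := nonneg b (by linarith)
      linarith
  intro t ht r hr hrt
  have hmono : d r ≤ d (t - 1) := mono r (by linarith) (t - 1) hrt
  have hN1 : N ≤ d (t - 1) := by
    have := mono 1 (by norm_num) (t - 1) (by linarith)
    linarith [hd1]
  have hg : 2 * d (t - 1) + 1 ≤ d t := by
    have := gap (t - 1) (by linarith)
    have e : t - 1 + 1 = t := by ring
    rwa [e] at this
  rw [h0]
  linarith
end

section
/- Let H ⊆ ℤ² be a good domain and let h = (t,n) ∈ H. If the set S = {h' ∈ H : h' ≤ h} has a unique minimal element (s,m), then S = {(t',n') ∈ ℤ² : s ≤ t' ≤ t and m ≤ n' ≤ n}, i.e. S is the full lattice rectangle with corners (s,m) and (t,n). -/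
/-!
Closure under the unit shifts makes `H` an upper set, so the rectangle `[m₀, h]` lies in the
down-set of `h`. Conversely, the down-set is finite, so below each of its elements lies an element
minimal in `H`; by uniqueness that element is `m₀`.
-/

/-- A nonempty `H ⊆ ℤ²` is a good domain if it is closed under the two unit forward
shifts and every down-set `{h' ∈ H : h' ≤ h}` (product order) is finite. -/
def GoodDomain (H : Set (ℤ × ℤ)) : Prop :=
  H.Nonempty ∧
    (∀ p ∈ H, (p.1 + 1, p.2) ∈ H ∧ (p.1, p.2 + 1) ∈ H) ∧
    ∀ h ∈ H, {h' ∈ H | h' ≤ h}.Finite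

lemma isUpperSet_of_forall_add_one_mem {H : Set (ℤ × ℤ)}
    (hshift : ∀ p ∈ H, (p.1 + 1, p.2) ∈ H ∧ (p.1, p.2 + 1) ∈ H) : IsUpperSet H := by
  rintro ⟨a, b⟩ ⟨c, d⟩ ⟨hac, hbd⟩ hp
  have hcb : (c, b) ∈ H :=
    Int.leInduction (motive := fun n _ => (n, b) ∈ H) hp (fun n _ hn => (hshift _ hn).1) c hac
  exact Int.leInduction (motive := fun n _ => (c, n) ∈ H) hcb
    (fun n _ hn => (hshift _ hn).2) d hbd

lemma GoodDomain.isUpperSet {H : Set (ℤ × ℤ)} (hH : GoodDomain H) : IsUpperSet H :=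
  isUpperSet_of_forall_add_one_mem hH.2.1

lemma exists_le_minimal_of_finite_downset {α : Type*} [Preorder α] {s : Set α} {x : α}
    (hx : x ∈ s) (hfin : {y ∈ s | y ≤ x}.Finite) : ∃ b ≤ x, Minimal (· ∈ s) b := by
  obtain ⟨b, hbx, hbmin⟩ := hfin.isPWO.exists_le_minimal (a := x) ⟨hx, le_rfl⟩
  exact ⟨b, hbx, hbmin.1.1, fun y hy hyb => hbmin.2 ⟨hy, hyb.trans hbmin.1.2⟩ hyb⟩

theorem stmt7_general (H : Set (ℤ × ℤ)) (hH : GoodDomain H) (h : ℤ × ℤ)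
    (m₀ : ℤ × ℤ) (hm₀H : m₀ ∈ H)
    (huniq : ∀ h' ∈ H, h' ≤ h → (∀ h'' ∈ H, h'' ≤ h' → h'' = h') → h' = m₀) :
    {h' ∈ H | h' ≤ h} = Set.Icc m₀ h := by
  refine Set.Subset.antisymm (fun x ⟨hxH, hxh⟩ => ⟨?_, hxh⟩)
    fun x hx => ⟨hH.isUpperSet hx.1 hm₀H, hx.2⟩
  obtain ⟨b, hbx, hbmin⟩ := exists_le_minimal_of_finite_downset hxH (hH.2.2 x hxH)
  rwa [← huniq b hbmin.prop (hbx.trans hxh) fun c hc hcb => hbmin.eq_of_le hc hcb]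

/-- If the down-set `S = {h' ∈ H : h' ≤ h}` of `h ∈ H` in a good domain
has a unique minimal element `m₀`, then `S` is the full lattice rectangle `[m₀, h]`. -/
theorem stmt7 (H : Set (ℤ × ℤ)) (hH : GoodDomain H) (h : ℤ × ℤ) (hh : h ∈ H)
    (m₀ : ℤ × ℤ) (hm₀H : m₀ ∈ H) (hm₀h : m₀ ≤ h)
    (hm₀min : ∀ h' ∈ H, h' ≤ m₀ → h' = m₀)
    (huniq : ∀ h' ∈ H, h' ≤ h → (∀ h'' ∈ H, h'' ≤ h' → h'' = h') → h' = m₀) :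
    {h' ∈ H | h' ≤ h} = Set.Icc m₀ h :=
  stmt7_general H hH h m₀ hm₀H huniq
end

section
/- Let k₁ ≥ 2 and consider the real (or rational-function) recurrence x_{t+1} + x_{t−1} = a/x_t^{k₁} with x_{−2} = −x, x_{−1} = 1, viewed over the field of rational functions in a. Let γ_t denote the degree of x_t as a rational function of a. Then γ_{t+1} ≥ k₁·γ_t − γ_{t−1} − 1 for all t ≥ −1, and consequently γ_{t+1} ≥ γ_t + 1 for all t ≥ 0; in particular x_t ≠ 0 for all t. -/
open Polynomial

namespace Stmt9Aux

variable {K : Type*} [Field K]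

/-- The "height" of a rational function. -/
noncomputable def G (f : RatFunc K) : ℕ := max f.num.natDegree f.denom.natDegree

lemma G_add_le (f g : RatFunc K) : G (f + g) ≤ G f + G g := by
  by_cases h0 : f + g = 0
  · simp [G, h0]
  have hdf := RatFunc.denom_ne_zero f
  have hdg := RatFunc.denom_ne_zero g
  have hdfg := RatFunc.denom_ne_zero (f + g)
  have hnfg := RatFunc.num_ne_zero h0
  have E := RatFunc.num_denom_add f g
  have hs : f.num * g.denom + f.denom * g.num ≠ 0 := by
    intro h
    rw [h, zero_mul] at E
    exact (mul_ne_zero hnfg (mul_ne_zero hdf hdg)) E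
  have hE : (f + g).num.natDegree + (f.denom.natDegree + g.denom.natDegree)
      = (f.num * g.denom + f.denom * g.num).natDegree + (f + g).denom.natDegree := by
    have h2 := congrArg natDegree E
    rwa [natDegree_mul hnfg (mul_ne_zero hdf hdg), natDegree_mul hs hdfg,
      natDegree_mul hdf hdg] at h2
  have hd : (f + g).denom.natDegree ≤ f.denom.natDegree + g.denom.natDegree := by
    have h3 := natDegree_le_of_dvd (RatFunc.denom_add_dvd f g) (mul_ne_zero hdf hdg)
    rwa [natDegree_mul hdf hdg] at h3
  have hsd : (f.num * g.denom + f.denom * g.num).natDegree ≤ G f + G g := by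
    refine (natDegree_add_le _ _).trans (max_le ?_ ?_)
    · exact natDegree_mul_le.trans (add_le_add (le_max_left _ _) (le_max_right _ _))
    · exact natDegree_mul_le.trans (add_le_add (le_max_right _ _) (le_max_left _ _))
  refine max_le ?_ (hd.trans (add_le_add (le_max_right _ _) (le_max_right _ _)))
  omega

lemma num_denom_of_coprime {P Q : K[X]} (hQ : Q ≠ 0) (hco : IsCoprime P Q) :
    ((algebraMap K[X] (RatFunc K) P / algebraMap K[X] (RatFunc K) Q).num ∣ P
      ∧ P ∣ (algebraMap K[X] (RatFunc K) P / algebraMap K[X] (RatFunc K) Q).num)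
    ∧ ((algebraMap K[X] (RatFunc K) P / algebraMap K[X] (RatFunc K) Q).denom ∣ Q
      ∧ Q ∣ (algebraMap K[X] (RatFunc K) P / algebraMap K[X] (RatFunc K) Q).denom) := by
  set u := algebraMap K[X] (RatFunc K) P / algebraMap K[X] (RatFunc K) Q with hu_def
  have hu : u.num * Q = P * u.denom := (RatFunc.num_mul_eq_mul_denom_iff hQ).mpr hu_def
  refine ⟨⟨RatFunc.num_div_dvd P hQ, hco.dvd_of_dvd_mul_right ⟨u.denom, hu⟩⟩,
    ⟨(RatFunc.denom_dvd hQ).mpr ⟨P, hu_def⟩,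
      hco.symm.dvd_of_dvd_mul_left ⟨u.num, by rw [← hu]; ring⟩⟩⟩

lemma X_div_pow_spec (k : ℕ) {f : RatFunc K} (hf : f ≠ 0) (hfX : ¬ Polynomial.X ∣ f.num) :
    (RatFunc.X / f ^ k).num.natDegree = 1 + k * f.denom.natDegree
    ∧ (RatFunc.X / f ^ k).denom.natDegree = k * f.num.natDegree
    ∧ Polynomial.X ∣ (RatFunc.X / f ^ k).num
    ∧ ¬ Polynomial.X ∣ (RatFunc.X / f ^ k).denom := by
  have hp : f.num ≠ 0 := RatFunc.num_ne_zero hf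
  have hq : f.denom ≠ 0 := RatFunc.denom_ne_zero f
  have hP : (Polynomial.X * f.denom ^ k : K[X]) ≠ 0 := mul_ne_zero X_ne_zero (pow_ne_zero _ hq)
  have hQ : (f.num ^ k : K[X]) ≠ 0 := pow_ne_zero _ hp
  have hco : IsCoprime (Polynomial.X * f.denom ^ k) (f.num ^ k) :=
    IsCoprime.mul_left ((Polynomial.prime_X.coprime_iff_not_dvd.mpr hfX).pow_right)
      ((RatFunc.isCoprime_num_denom f).symm.pow)
  have h1 : algebraMap K[X] (RatFunc K) f.num ≠ 0 := RatFunc.algebraMap_ne_zero hp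
  have h2 : algebraMap K[X] (RatFunc K) f.denom ≠ 0 := RatFunc.algebraMap_ne_zero hq
  have he : RatFunc.X / f ^ k
      = algebraMap K[X] (RatFunc K) (Polynomial.X * f.denom ^ k)
        / algebraMap K[X] (RatFunc K) (f.num ^ k) := by
    rw [map_mul, map_pow, map_pow, RatFunc.algebraMap_X]
    conv_lhs => rw [← RatFunc.num_div_denom f]
    rw [div_pow, div_div_eq_mul_div]
  obtain ⟨⟨d1, d2⟩, ⟨d3, d4⟩⟩ := num_denom_of_coprime hQ hco
  rw [← he] at d1 d2 d3 d4
  have hune : (RatFunc.X / f ^ k).num ≠ 0 := by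
    apply RatFunc.num_ne_zero
    rw [he]
    exact div_ne_zero (RatFunc.algebraMap_ne_zero hP) (RatFunc.algebraMap_ne_zero hQ)
  have hnn : (RatFunc.X / f ^ k).num.natDegree = (Polynomial.X * f.denom ^ k).natDegree :=
    le_antisymm (natDegree_le_of_dvd d1 hP) (natDegree_le_of_dvd d2 hune)
  have hdd : (RatFunc.X / f ^ k).denom.natDegree = (f.num ^ k).natDegree :=
    le_antisymm (natDegree_le_of_dvd d3 hQ)
      (natDegree_le_of_dvd d4 (RatFunc.denom_ne_zero _))
  refine ⟨?_, ?_, (dvd_mul_right Polynomial.X (f.denom ^ k)).trans d2, ?_⟩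
  · rw [hnn, natDegree_mul X_ne_zero (pow_ne_zero _ hq), natDegree_X, natDegree_pow]
  · rw [hdd, natDegree_pow]
  · intro h
    exact hfX (Polynomial.prime_X.dvd_of_dvd_pow (h.trans d3))

lemma G_X_div_pow (k : ℕ) {f : RatFunc K} (hf : f ≠ 0) (hfX : ¬ Polynomial.X ∣ f.num) :
    k * G f ≤ G (RatFunc.X / f ^ k) := by
  obtain ⟨e1, e2, -, -⟩ := X_div_pow_spec k hf hfX
  unfold G
  rw [e1, e2]
  rcases le_total f.num.natDegree f.denom.natDegree with h | h
  · rw [max_eq_right h]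
    exact le_trans (by omega) (le_max_left (1 + k * f.denom.natDegree) (k * f.num.natDegree))
  · rw [max_eq_left h]
    exact le_max_right _ _

lemma step {k : ℕ} {f g h : RatFunc K} (hfX : ¬ Polynomial.X ∣ f.num)
    (hgn : ¬ Polynomial.X ∣ g.num) (hgd : ¬ Polynomial.X ∣ g.denom)
    (hrel : h + g = RatFunc.X / f ^ k) :
    ¬ Polynomial.X ∣ h.num ∧ ¬ Polynomial.X ∣ h.denom := by
  have hf : f ≠ 0 := by rintro rfl; exact hfX (by simp)
  obtain ⟨-, -, hun, hud⟩ := X_div_pow_spec k hf hfX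
  rw [← hrel] at hun hud
  have E := RatFunc.num_denom_add h g
  have pX : Prime (Polynomial.X : K[X]) := prime_X
  have hsX : Polynomial.X ∣ h.num * g.denom + h.denom * g.num := by
    have h1 : Polynomial.X ∣ (h + g).num * (h.denom * g.denom) := hun.mul_right _
    rw [E] at h1
    rcases pX.dvd_mul.mp h1 with h2 | h2
    · exact h2
    · exact absurd h2 hud
  have hco := RatFunc.isCoprime_num_denom h
  have hnum : ¬ Polynomial.X ∣ h.num := by
    intro hn
    have h3 : Polynomial.X ∣ h.denom * g.num := (dvd_add_right (hn.mul_right _)).mp hsX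
    rcases pX.dvd_mul.mp h3 with h4 | h4
    · exact pX.not_unit (hco.isUnit_of_dvd' hn h4)
    · exact hgn h4
  refine ⟨hnum, ?_⟩
  intro hd
  have h3 : Polynomial.X ∣ h.num * g.denom := (dvd_add_left (hd.mul_right _)).mp hsX
  rcases pX.dvd_mul.mp h3 with h4 | h4
  · exact hnum h4
  · exact hgd h4

end Stmt9Aux

open Stmt9Aux in
/-- For the recurrence `x_{t+1} + x_{t−1} = a/x_t^{k₁}` (with `k₁ ≥ 2`),
`x_{−2} = −x`, `x_{−1} = 1`, over the field of rational functions in `a` (whose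
coefficient field contains the indeterminate `x`), the degrees `γ_t` of the iterates
as rational functions of `a` satisfy `γ_{t+1} ≥ k₁·γ_t − γ_{t−1} − 1` for `t ≥ −1`,
hence `γ_{t+1} ≥ γ_t + 1` for `t ≥ 0`; in particular `x_t ≠ 0` for all `t ≥ −2`. -/
theorem stmt9 (k₁ : ℕ) (hk : 2 ≤ k₁)
    (x : ℤ → RatFunc (RatFunc ℚ))
    (hinit2 : x (-2) = -(RatFunc.C (RatFunc.X : RatFunc ℚ)))
    (hinit1 : x (-1) = 1)
    (hrec : ∀ t : ℤ, -1 ≤ t → x (t + 1) + x (t - 1) = (RatFunc.X : RatFunc (RatFunc ℚ)) / (x t) ^ k₁)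
    (γ : ℤ → ℤ)
    (hγ : ∀ t : ℤ, γ t = max ((x t).num.natDegree : ℤ) ((x t).denom.natDegree : ℤ)) :
    (∀ t : ℤ, -1 ≤ t → k₁ * γ t - γ (t - 1) - 1 ≤ γ (t + 1)) ∧
      (∀ t : ℤ, 0 ≤ t → γ t + 1 ≤ γ (t + 1)) ∧
      (∀ t : ℤ, -2 ≤ t → x t ≠ 0) := by
  -- base facts
  have hq1n : ¬ Polynomial.X ∣ (x (-1)).num := by
    rw [hinit1, RatFunc.num_one]
    simp [Polynomial.X_dvd_iff]
  have hq1d : ¬ Polynomial.X ∣ (x (-1)).denom := by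
    rw [hinit1, RatFunc.denom_one]
    simp [Polynomial.X_dvd_iff]
  have hx2 : x (-2) = algebraMap (RatFunc ℚ)[X] (RatFunc (RatFunc ℚ))
      (-(Polynomial.C (RatFunc.X : RatFunc ℚ))) := by
    rw [hinit2, map_neg, RatFunc.algebraMap_C]
  have hcne : (RatFunc.X : RatFunc ℚ) ≠ 0 := RatFunc.X_ne_zero
  have hq2n : ¬ Polynomial.X ∣ (x (-2)).num := by
    rw [hx2, RatFunc.num_algebraMap]
    simp [Polynomial.X_dvd_iff, hcne]
  have hq2d : ¬ Polynomial.X ∣ (x (-2)).denom := by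
    rw [hx2, RatFunc.denom_algebraMap]
    simp [Polynomial.X_dvd_iff]
  -- the induction giving nondivisibility by X for all t ≥ -2
  have main : ∀ n : ℕ, (¬ Polynomial.X ∣ (x ((n:ℤ) - 2)).num ∧ ¬ Polynomial.X ∣ (x ((n:ℤ) - 2)).denom)
      ∧ (¬ Polynomial.X ∣ (x ((n:ℤ) - 1)).num ∧ ¬ Polynomial.X ∣ (x ((n:ℤ) - 1)).denom) := by
    intro n
    induction n with
    | zero =>
      refine ⟨⟨?_, ?_⟩, ⟨?_, ?_⟩⟩ <;> norm_num [hq2n, hq2d, hq1n, hq1d]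
    | succ m ih =>
      have hrel := hrec ((m:ℤ) - 1) (by omega)
      rw [show (m:ℤ) - 1 + 1 = (m:ℤ) by ring, show (m:ℤ) - 1 - 1 = (m:ℤ) - 2 by ring] at hrel
      have hstep := Stmt9Aux.step ih.2.1 ih.1.1 ih.1.2 hrel
      constructor
      · rw [show ((m+1:ℕ):ℤ) - 2 = (m:ℤ) - 1 by push_cast; ring]
        exact ih.2
      · rw [show ((m+1:ℕ):ℤ) - 1 = (m:ℤ) by push_cast; ring]
        exact hstep
  have hQall : ∀ t : ℤ, -2 ≤ t → ¬ Polynomial.X ∣ (x t).num ∧ ¬ Polynomial.X ∣ (x t).denom := by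
    intro t ht
    have h := (main (t + 2).toNat).1
    rwa [show ((t+2).toNat : ℤ) - 2 = t by omega] at h
  have hne : ∀ t : ℤ, -2 ≤ t → x t ≠ 0 := by
    rintro t ht rfl0
    exact (hQall t ht).1 (by rw [rfl0]; simp)
  -- γ = cast of G
  have hγG : ∀ s : ℤ, γ s = (G (x s) : ℤ) := by
    intro s
    rw [hγ s, G]
    exact (Nat.cast_max _ _).symm
  have hpos : ∀ t : ℤ, 0 ≤ γ t := by
    intro t
    rw [hγG]
    exact Int.natCast_nonneg _
  -- sharp inequality
  have hsharp : ∀ t : ℤ, -1 ≤ t → (k₁:ℤ) * γ t ≤ γ (t+1) + γ (t-1) := by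
    intro t ht
    have hQt := hQall t (by omega)
    have h1 : k₁ * G (x t) ≤ G (RatFunc.X / x t ^ k₁) :=
      G_X_div_pow k₁ (hne t (by omega)) hQt.1
    rw [← hrec t ht] at h1
    have h2 := G_add_le (x (t+1)) (x (t-1))
    have h3 := h1.trans h2
    rw [hγG t, hγG (t+1), hγG (t-1)]
    exact_mod_cast h3
  have hk' : (2:ℤ) ≤ (k₁:ℤ) := by exact_mod_cast hk
  -- exact values of γ (-1) and γ 0
  have hγm1 : γ (-1) = 0 := by
    rw [hγ, hinit1, RatFunc.num_one, RatFunc.denom_one]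
    simp
  have hx0 : x 0 = algebraMap (RatFunc ℚ)[X] (RatFunc (RatFunc ℚ))
      (Polynomial.X + Polynomial.C (RatFunc.X : RatFunc ℚ)) := by
    have h := hrec (-1) (by norm_num)
    norm_num [hinit1] at h
    have h0 : x 0 = RatFunc.X - x (-2) := by
      rw [← h]; ring
    rw [h0, hinit2, sub_neg_eq_add, map_add, RatFunc.algebraMap_X, RatFunc.algebraMap_C]
  have hγ0 : γ 0 = 1 := by
    rw [hγ, hx0, RatFunc.num_algebraMap, RatFunc.denom_algebraMap, natDegree_X_add_C]
    simp
  refine ⟨?_, ?_, hne⟩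
  · intro t ht
    have h := hsharp t ht
    linarith
  · have part2 : ∀ n : ℕ, γ (n:ℤ) + 1 ≤ γ ((n:ℤ) + 1) := by
      intro n
      induction n with
      | zero =>
        have h := hsharp 0 (by norm_num)
        rw [show (0:ℤ) - 1 = -1 by norm_num] at h
        rw [hγm1, hγ0, show (0:ℤ) + 1 = 1 by norm_num] at h
        push_cast
        rw [hγ0]
        linarith
      | succ m ih =>
        have h := hsharp ((m:ℤ) + 1) (by omega)
        rw [show (m:ℤ) + 1 - 1 = (m:ℤ) by ring] at h
        push_cast
        nlinarith [mul_nonneg (by linarith : (0:ℤ) ≤ (k₁:ℤ) - 2) (hpos ((m:ℤ) + 1)), ih]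
    intro t ht
    have h := part2 t.toNat
    rwa [Int.toNat_of_nonneg ht] at h
end

section
/- Let d ≥ 1, let k_i, l_i be positive even integers for 1 ≤ i ≤ d, and assume min_i (k_i l_i − 1) > max_i max(k_i, l_i). Consider the recurrence x_{t+1,n} + x_{t−1,n} = Σ_{i=1}^d (a_i/x_{t,n+e_i}^{k_i} + b_i/x_{t,n−e_i}^{l_i}) over the field of Laurent series in ε, with generic initial data except x_{0,0} = ε. Then x_{2,0} = −ε + O(ε^M) with M = min_i (k_i l_i), i.e. the ε-order of x_{2,0} + ε is at least M. -/
/-!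
The leading terms give `x_{1,e_i}` order `-l_i` and `x_{1,-e_i}` order `-k_i`, so by additivity of
the order valuation `a_i / x_{1,e_i}^{k_i}` and `b_i / x_{1,-e_i}^{l_i}` both have order at least
`k_i l_i`. Hence `x_{2,0} + ε = x_{2,0} + x_{0,0}` vanishes below degree `min_i k_i l_i`.
-/

open HahnSeries

theorem HahnSeries.orderTop_single_add_of_lt {Γ R : Type*} [LinearOrder Γ] [AddMonoid R]
    {n : Γ} {c : R} {r : R⟦Γ⟧} (hc : c ≠ 0) (hr : (n : WithTop Γ) < r.orderTop) :
    (single n c + r).orderTop = n := by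
  rw [orderTop_add_eq_left (by rwa [orderTop_single hc]), orderTop_single hc]

namespace LaurentSeries

variable {F : Type*} [Field F]

theorem le_orderTop_C_div_pow {y : LaurentSeries F} {L : ℤ} (hy : y.orderTop = -L)
    (a : F) (K : ℕ) : ((K * L : ℤ) : WithTop ℤ) ≤ (C a / y ^ K).orderTop := by
  rcases eq_or_ne a 0 with rfl | ha
  · simp
  rw [← addVal_apply, AddValuation.map_div, AddValuation.map_pow, addVal_apply, addVal_apply, hy,
    C_apply, orderTop_single ha]
  norm_cast
  simp

theorem coeff_C_div_pow_single_add_eq_zero {L K : ℕ} {c : F} (a : F) {r : LaurentSeries F}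
    (hc : c ≠ 0) (hL : 0 < L) (hr : ∀ j < 0, r.coeff j = 0) {j : ℤ} (hj : j < K * L) :
    (C a / (single (-(L : ℤ)) c + r) ^ K).coeff j = 0 := by
  have hr0 : (0 : WithTop ℤ) ≤ r.orderTop :=
    le_orderTop_iff_forall.2 fun j hj => hr j (by exact_mod_cast hj)
  have hlt : ((-L : ℤ) : WithTop ℤ) < r.orderTop :=
    lt_of_lt_of_le (by exact_mod_cast neg_neg_of_pos (Int.natCast_pos.2 hL)) hr0
  exact coeff_eq_zero_of_lt_orderTop
    (lt_of_lt_of_le (by exact_mod_cast hj)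
      (le_orderTop_C_div_pow (orderTop_single_add_of_lt hc hlt) a K))

end LaurentSeries

open LaurentSeries

theorem stmt11_general {F : Type*} [Field F] (d : ℕ) (k l : Fin d → ℕ)
    (hk : ∀ i, Even (k i) ∧ 0 < k i) (hl : ∀ i, Even (l i) ∧ 0 < l i)
    (a b : Fin d → F) (ha : ∀ i, a i ≠ 0) (hb : ∀ i, b i ≠ 0)
    (x : ℤ → (Fin d → ℤ) → LaurentSeries F)
    (hx00 : x 0 0 = HahnSeries.single (1 : ℤ) (1 : F))
    (hx1p : ∀ i : Fin d, ∃ r : LaurentSeries F,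
      x 1 (Pi.single i 1) = HahnSeries.single (-(l i : ℤ)) (b i) + r ∧
        ∀ j : ℤ, j < 0 → r.coeff j = 0)
    (hx1m : ∀ i : Fin d, ∃ r : LaurentSeries F,
      x 1 (-(Pi.single i 1)) = HahnSeries.single (-(k i : ℤ)) (a i) + r ∧
        ∀ j : ℤ, j < 0 → r.coeff j = 0)
    (hrec : x 2 0 + x 0 0 =
      ∑ i, (HahnSeries.C (a i) / (x 1 (Pi.single i 1)) ^ (k i) +
            HahnSeries.C (b i) / (x 1 (-(Pi.single i 1))) ^ (l i))) :
    ∀ j : ℤ, (∀ i : Fin d, j < (k i : ℤ) * (l i : ℤ)) →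
      (x 2 0 + HahnSeries.single (1 : ℤ) (1 : F)).coeff j = 0 := by
  intro j hj
  rw [← hx00, hrec, coeff_sum]
  refine Finset.sum_eq_zero fun i _ => ?_
  obtain ⟨rp, hxp, hrp⟩ := hx1p i
  obtain ⟨rm, hxm, hrm⟩ := hx1m i
  rw [coeff_add, hxp, hxm,
    coeff_C_div_pow_single_add_eq_zero _ (hb i) (hl i).2 hrp (hj i),
    coeff_C_div_pow_single_add_eq_zero _ (ha i) (hk i).2 hrm (mul_comm (k i : ℤ) _ ▸ hj i),
    add_zero]

/-- singularity-confinement cancellation for the multi-dimensional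
coprimeness-preserving discrete KdV equation. With `x_{0,0} = ε`,
`x_{1,e_i} = b_i ε^{−l_i} + O(1)`, `x_{1,−e_i} = a_i ε^{−k_i} + O(1)` and the recurrence
`x_{2,0} + x_{0,0} = Σ_i (a_i/x_{1,e_i}^{k_i} + b_i/x_{1,−e_i}^{l_i})` over the field of
Laurent series, under the condition `min_i (k_i l_i − 1) > max_i max(k_i, l_i)` one has
`x_{2,0} = −ε + O(ε^M)` with `M = min_i (k_i l_i)`. -/
theorem stmt11 {F : Type*} [Field F] (d : ℕ) (hd : 1 ≤ d) (k l : Fin d → ℕ)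
    (hk : ∀ i, Even (k i) ∧ 0 < k i) (hl : ∀ i, Even (l i) ∧ 0 < l i)
    (hcond : ∀ i j : Fin d, (max (k j) (l j) : ℤ) < (k i : ℤ) * (l i : ℤ) - 1)
    (a b : Fin d → F) (ha : ∀ i, a i ≠ 0) (hb : ∀ i, b i ≠ 0)
    (x : ℤ → (Fin d → ℤ) → LaurentSeries F)
    (hx00 : x 0 0 = HahnSeries.single (1 : ℤ) (1 : F))
    (hx1p : ∀ i : Fin d, ∃ r : LaurentSeries F,
      x 1 (Pi.single i 1) = HahnSeries.single (-(l i : ℤ)) (b i) + r ∧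
        ∀ j : ℤ, j < 0 → r.coeff j = 0)
    (hx1m : ∀ i : Fin d, ∃ r : LaurentSeries F,
      x 1 (-(Pi.single i 1)) = HahnSeries.single (-(k i : ℤ)) (a i) + r ∧
        ∀ j : ℤ, j < 0 → r.coeff j = 0)
    (hrec : x 2 0 + x 0 0 =
      ∑ i, (HahnSeries.C (a i) / (x 1 (Pi.single i 1)) ^ (k i) +
            HahnSeries.C (b i) / (x 1 (-(Pi.single i 1))) ^ (l i))) :
    ∀ j : ℤ, (∀ i : Fin d, j < (k i : ℤ) * (l i : ℤ)) →
      (x 2 0 + HahnSeries.single (1 : ℤ) (1 : F)).coeff j = 0 :=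
  stmt11_general d k l hk hl a b ha hb x hx00 hx1p hx1m hrec
end

section
/- Let k ≥ 2 be an even integer and a, b nonzero elements of a UFD R. In the Laurent polynomial ring over R generated by initial variables of the two-dimensional tau-function equation f_{t,n} f_{t−2,n−1}^k f_{t−1,n−2}^k = −f_{t−2,n−2} f_{t−1,n}^k f_{t,n−1}^k + a f_{t−1,n−1}^{k²−1} f_{t,n−2}^{k²} f_{t−1,n}^k f_{t−2,n−1}^k + b f_{t−1,n−1}^{k²−1} f_{t−2,n}^{k²} f_{t,n−1}^k f_{t−1,n−2}^k on a good domain, suppose the iterates f_{t−1,n−1}, f_{t−2,n}, f_{t,n−1}, f_{t−1,n−2} are Laurent polynomials pairwise coprime with the irreducible Laurent polynomial f_{t−1,n}, and f_{t,n} is a Laurent polynomial. Then f_{t−1,n} does not divide f_{t,n}. -/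
/-! Modulo `p`, a multiple of `p` on the left and the two terms carrying `p ^ k` (`k ≥ 1`) on
the right vanish, so `p` would divide `b * g₁ ^ (k ^ 2 - 1) * g₂ ^ (k ^ 2) * g₃ ^ k * g₄ ^ k`;
but `p` is prime and divides none of these factors. -/

theorem IsRelPrime.not_dvd_pow {M : Type*} [CommMonoid M] [DecompositionMonoid M] {g p : M}
    (hg : IsRelPrime g p) (hp : ¬IsUnit p) (n : ℕ) : ¬p ∣ g ^ n :=
  fun h => hp (hg.pow_left h dvd_rfl)

theorem stmt16_general {A : Type*} [CommRing A] [IsDomain A] [UniqueFactorizationMonoid A]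
    (k : ℕ) (hk : 2 ≤ k)
    (a b p g₁ g₂ g₃ g₄ c₁ c₂ c₄ ftn : A)
    (hp : Irreducible p)
    (h₁ : IsRelPrime g₁ p) (h₂ : IsRelPrime g₂ p)
    (h₃ : IsRelPrime g₃ p) (h₄ : IsRelPrime g₄ p)
    (hb : ¬ p ∣ b)
    (hrel : ftn * c₂ ^ k * g₄ ^ k =
      -c₁ * p ^ k * g₃ ^ k +
        a * g₁ ^ (k ^ 2 - 1) * c₄ ^ (k ^ 2) * p ^ k * c₂ ^ k +
        b * g₁ ^ (k ^ 2 - 1) * g₂ ^ (k ^ 2) * g₃ ^ k * g₄ ^ k) :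
    ¬ p ∣ ftn := by
  intro hdvd
  have hpk : p ∣ p ^ k := dvd_pow_self p (by omega)
  have hlhs : p ∣ ftn * c₂ ^ k * g₄ ^ k := (hdvd.mul_right _).mul_right _
  rw [hrel] at hlhs
  have hlast : p ∣ b * g₁ ^ (k ^ 2 - 1) * g₂ ^ (k ^ 2) * g₃ ^ k * g₄ ^ k :=
    (dvd_add_right (dvd_add ((hpk.mul_left _).mul_right _)
      ((hpk.mul_left _).mul_right _))).mp hlhs
  have hprime : Prime p := hp.prime
  have hp_nonunit := hp.not_isUnit
  exact hprime.not_dvd_mul (hprime.not_dvd_mul (hprime.not_dvd_mul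
    (hprime.not_dvd_mul hb (h₁.not_dvd_pow hp_nonunit _)) (h₂.not_dvd_pow hp_nonunit _))
    (h₃.not_dvd_pow hp_nonunit _)) (h₄.not_dvd_pow hp_nonunit _) hlast

/-- Step 3 of Theorem B.6: In the Laurent polynomial ring `A` (a UFD)
suppose the iterates satisfy the tau-function relation
`f_{t,n} f_{t−2,n−1}^k f_{t−1,n−2}^k = −f_{t−2,n−2} f_{t−1,n}^k f_{t,n−1}^k
+ a f_{t−1,n−1}^{k²−1} f_{t,n−2}^{k²} f_{t−1,n}^k f_{t−2,n−1}^k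
+ b f_{t−1,n−1}^{k²−1} f_{t−2,n}^{k²} f_{t,n−1}^k f_{t−1,n−2}^k`,
with `p = f_{t−1,n}` irreducible, `f_{t−1,n−1}, f_{t−2,n}, f_{t,n−1}, f_{t−1,n−2}`
each coprime to `p`, and `b` not divisible by `p`. Then `p` does not divide `f_{t,n}`.
Here `g₁ = f_{t−1,n−1}`, `g₂ = f_{t−2,n}`, `g₃ = f_{t,n−1}`, `g₄ = f_{t−1,n−2}`,
`c₁ = f_{t−2,n−2}`, `c₂ = f_{t−2,n−1}`, `c₃ = f_{t−1,n−2}` (= `g₄`), `c₄ = f_{t,n−2}`. -/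
theorem stmt16 {A : Type*} [CommRing A] [IsDomain A] [UniqueFactorizationMonoid A]
    (k : ℕ) (hk : 2 ≤ k) (hkeven : Even k)
    (a b p g₁ g₂ g₃ g₄ c₁ c₂ c₄ ftn : A)
    (hp : Irreducible p)
    (h₁ : IsRelPrime g₁ p) (h₂ : IsRelPrime g₂ p)
    (h₃ : IsRelPrime g₃ p) (h₄ : IsRelPrime g₄ p)
    (hb : ¬ p ∣ b)
    (hrel : ftn * c₂ ^ k * g₄ ^ k =
      -c₁ * p ^ k * g₃ ^ k +
        a * g₁ ^ (k ^ 2 - 1) * c₄ ^ (k ^ 2) * p ^ k * c₂ ^ k +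
        b * g₁ ^ (k ^ 2 - 1) * g₂ ^ (k ^ 2) * g₃ ^ k * g₄ ^ k) :
    ¬ p ∣ ftn :=
  stmt16_general k hk a b p g₁ g₂ g₃ g₄ c₁ c₂ c₄ ftn hp h₁ h₂ h₃ h₄ hb hrel
end

section
/- Let R be an algebraically closed field, a, b ∈ R nonzero, and k ≥ 2 an integer. Set initial values for the tau-function equation f_{t,n} = (−f_{t−2,n−2} f_{t−1,n}^k f_{t,n−1}^k + a f_{t−1,n−1}^{k²−1} f_{t,n−2}^{k²} f_{t−1,n}^k f_{t−2,n−1}^k + b f_{t−1,n−1}^{k²−1} f_{t−2,n}^{k²} f_{t,n−1}^k f_{t−1,n−2}^k)/(f_{t−2,n−1}^k f_{t−1,n−2}^k) on the first quadrant as: f_{01}=f_{02}=f_{10}=f_{11}=f_{12}=f_{13}=f_{14}=f_{21}=1, f_{03} = b^{−1/k²}, f_{04} = γ, f_{20} = δ, and f_{00} an indeterminate, where γ^{k²} ≠ 1/b and δ^{k²} ≠ −b/a. Then f_{22} = −f_{00} + a δ^{k²} + b (a degree-one, non-unit polynomial in f_{00}), f_{23} = a, and f_{24} = a^k b^{1/k}(b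 γ^{k²} − 1) + a·f_{22}^{k²}; in particular f_{22} does not divide f_{24}. -/
open Polynomial

/-! Substituting `β^{k²} = b⁻¹` makes the two `f₂₂^k` terms of `f₂₃` cancel, so `f₂₃ = a`
is a constant; then `f₂₄ = c + a f₂₂^{k²}` with `c = a^k b^{1/k}(b γ^{k²} - 1)`, which is
nonzero because `γ^{k²} ≠ 1/b`. A linear polynomial dividing `f₂₄` would divide the nonzero
constant `c`, which is impossible. -/

namespace Polynomial

theorem natDegree_neg_X_add_C {R : Type*} [Ring R] [Nontrivial R] (c : R) :
    (-X + C c).natDegree = 1 := by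
  rw [← natDegree_neg, neg_add, neg_neg, ← sub_eq_add_neg, natDegree_X_sub_C]

theorem not_dvd_C_add_mul_pow {K : Type*} [Field K] {p q : K[X]} {c : K} {n : ℕ}
    (hp : ¬IsUnit p) (hc : c ≠ 0) (hn : n ≠ 0) : ¬p ∣ C c + q * p ^ n := fun h =>
  hp <| isUnit_of_dvd_unit
    ((dvd_add_left (dvd_mul_of_dvd_right (dvd_pow_self p hn) q)).mp h) (isUnit_C.mpr hc.isUnit)

end Polynomial

theorem stmt17_general {R : Type*} [Field R]
    (k : ℕ) (hk : 2 ≤ k) (a b γ δ β : R) (ha : a ≠ 0) (hb : b ≠ 0)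
    (hβ : β ^ (k ^ 2) = b⁻¹) (hγ : γ ^ (k ^ 2) ≠ 1 / b)
    (f₂₂ f₂₃ f₂₄ : R[X])
    -- the tau-function equation at (2,2), (2,3), (2,4) after substituting the
    -- initial values (the factors equal to 1 are omitted):
    (h₂₂ : f₂₂ = -X + C (a * δ ^ (k ^ 2)) + C b)
    (h₂₃ : f₂₃ = -f₂₂ ^ k + C a + C (b * β ^ (k ^ 2)) * f₂₂ ^ k)
    (h₂₄ : f₂₄ * C (β ^ k) =
      -f₂₃ ^ k + C a * f₂₂ ^ (k ^ 2) * C (β ^ k) + C (b * γ ^ (k ^ 2)) * f₂₃ ^ k) :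
    f₂₂ = -X + C (a * δ ^ (k ^ 2) + b) ∧ f₂₂.natDegree = 1 ∧ ¬ IsUnit f₂₂ ∧
      f₂₃ = C a ∧
      f₂₄ = C (a ^ k * (β ^ k)⁻¹ * (b * γ ^ (k ^ 2) - 1)) + C a * f₂₂ ^ (k ^ 2) ∧
      ¬ f₂₂ ∣ f₂₄ := by
  have hk2 : k ^ 2 ≠ 0 := pow_ne_zero 2 (by omega)
  have hβk : β ^ k ≠ 0 := by
    refine pow_ne_zero _ fun hβ0 => hb ?_
    rw [hβ0, zero_pow hk2] at hβ
    exact inv_eq_zero.mp hβ.symm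
  set c := a ^ k * (β ^ k)⁻¹ * (b * γ ^ (k ^ 2) - 1) with hc_def
  have hc : c ≠ 0 := by
    refine mul_ne_zero (mul_ne_zero (pow_ne_zero _ ha) (inv_ne_zero hβk)) fun h => hγ ?_
    field_simp
    linear_combination h
  have h22 : f₂₂ = -X + C (a * δ ^ (k ^ 2) + b) := by rw [h₂₂, C_add, add_assoc]
  have hdeg : f₂₂.natDegree = 1 := h22 ▸ natDegree_neg_X_add_C _
  have hnu : ¬IsUnit f₂₂ := fun h => by simp [natDegree_eq_zero_of_isUnit h] at hdeg
  have h23 : f₂₃ = C a := by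
    rw [h₂₃, hβ, mul_inv_cancel₀ hb, C_1, one_mul]
    ring
  have h24 : f₂₄ = C c + C a * f₂₂ ^ (k ^ 2) := by
    have key : C c * C (β ^ k) = C (b * γ ^ (k ^ 2)) * C a ^ k - C a ^ k := by
      rw [← C_pow, ← C_mul, ← C_mul, ← C_sub, hc_def]
      congr 1
      field_simp
    apply mul_right_cancel₀ (C_ne_zero.mpr hβk)
    rw [h₂₄, h23]
    linear_combination -key
  exact ⟨h22, hdeg, hnu, h23, h24, h24 ▸ not_dvd_C_add_mul_pow hnu hc hk2⟩

/-- Step 8 of Theorem B.6: Over an algebraically closed field `R`, with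
`a, b ≠ 0`, `k ≥ 2`, initial values `f₀₁=f₀₂=f₁₀=f₁₁=f₁₂=f₁₃=f₁₄=f₂₁=1`, `f₀₃ = β`
(a fixed root with `β^{k²} = b⁻¹`, so `b^{1/k} = (β^k)⁻¹`), `f₀₄ = γ`, `f₂₀ = δ`, and
`f₀₀` an indeterminate, where `γ^{k²} ≠ 1/b` and `δ^{k²} ≠ −b/a`: the iterates of the
tau-function equation satisfy `f₂₂ = −f₀₀ + a δ^{k²} + b` (degree one and not a unit as
a polynomial in `f₀₀`), `f₂₃ = a`, and
`f₂₄ = a^k b^{1/k}(b γ^{k²} − 1) + a f₂₂^{k²}`; in particular `f₂₂ ∤ f₂₄`. -/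
theorem stmt17 {R : Type*} [Field R] [IsAlgClosed R]
    (k : ℕ) (hk : 2 ≤ k) (a b γ δ β : R) (ha : a ≠ 0) (hb : b ≠ 0)
    (hβ : β ^ (k ^ 2) = b⁻¹) (hγ : γ ^ (k ^ 2) ≠ 1 / b) (hδ : δ ^ (k ^ 2) ≠ -b / a)
    (f₂₂ f₂₃ f₂₄ : R[X])
    -- the tau-function equation at (2,2), (2,3), (2,4) after substituting the
    -- initial values (the factors equal to 1 are omitted):
    (h₂₂ : f₂₂ = -X + C (a * δ ^ (k ^ 2)) + C b)
    (h₂₃ : f₂₃ = -f₂₂ ^ k + C a + C (b * β ^ (k ^ 2)) * f₂₂ ^ k)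
    (h₂₄ : f₂₄ * C (β ^ k) =
      -f₂₃ ^ k + C a * f₂₂ ^ (k ^ 2) * C (β ^ k) + C (b * γ ^ (k ^ 2)) * f₂₃ ^ k) :
    f₂₂ = -X + C (a * δ ^ (k ^ 2) + b) ∧ f₂₂.natDegree = 1 ∧ ¬ IsUnit f₂₂ ∧
      f₂₃ = C a ∧
      f₂₄ = C (a ^ k * (β ^ k)⁻¹ * (b * γ ^ (k ^ 2) - 1)) + C a * f₂₂ ^ (k ^ 2) ∧
      ¬ f₂₂ ∣ f₂₄ :=
  stmt17_general k hk a b γ δ β ha hb hβ hγ f₂₂ f₂₃ f₂₄ h₂₂ h₂₃ h₂₄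
end

section
/- Suppose that for a family of Laurent polynomials f_{t,n} (indexed by a good domain in ℤ^{d+1}) each f_{t,n} is irreducible in the Laurent polynomial ring R = ℤ[{f_{−4,m}^±, f_{−3,m}^±, f_{−2,m}^±, f_{−1,m}^±}, {a_i, b_i}], and suppose their specializations y_t (obtained by substituting f_{−4,m} ↦ −x and f_{−3,m}=f_{−2,m}=f_{−1,m} ↦ 1) are polynomials in x with nonzero constant term, strictly increasing degrees d_t for t ≥ 0, and y_t | y_s for t ≤ s. Then for (t,n) ≠ (s,m), the elements f_{t,n} and f_{s,m} are coprime in R. -/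
/-- Suppose each iterate `f_{t,n}` is irreducible in the (UFD) Laurent
polynomial ring `A` of initial variables, and the specializations `y_t = φ(f_{t,n})`
(substituting `f_{−4,m} ↦ −x`, `f_{−3,m} = f_{−2,m} = f_{−1,m} ↦ 1`) are polynomials in
`x` with nonzero constant term, strictly increasing degrees, and `y_t ∣ y_s` for
`t ≤ s`.  (Units of `A` specialize to `±` monomials `x^α`, `α ∈ ℤ`, and for `n ≠ m` the
iterates `f_{t,n}`, `f_{t,m}` involve different initial variables `f_{−4,n'}` and hence
are not associates.)  Then for `(t,n) ≠ (s,m)` the elements `f_{t,n}` and `f_{s,m}` are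
coprime in `A`. -/
theorem stmt19 {A S : Type*} [CommRing A] [IsDomain A] [UniqueFactorizationMonoid A]
    [CommRing S] [IsDomain S] {ι : Type*}
    (f : ℕ → ι → A) (φ : A →+* Polynomial S) (y : ℕ → Polynomial S)
    (hspec : ∀ t n, φ (f t n) = y t)
    (hirr : ∀ t n, Irreducible (f t n))
    (hconst : ∀ t, (y t).coeff 0 ≠ 0)
    (hdeg : ∀ s t, s < t → (y s).natDegree < (y t).natDegree)
    (hdvd : ∀ t s, t ≤ s → y t ∣ y s)
    (hunit : ∀ u : A, IsUnit u → ∃ (c : S) (p : ℕ), IsUnit c ∧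
      (φ u = Polynomial.C c * Polynomial.X ^ p ∨ φ u * Polynomial.X ^ p = Polynomial.C c))
    (hvar : ∀ (t : ℕ) (n m : ι), n ≠ m → ¬ Associated (f t n) (f t m)) :
    ∀ (t s : ℕ) (n m : ι), (t, n) ≠ (s, m) → IsRelPrime (f t n) (f s m) := by
  have key : ∀ t s : ℕ, ∀ n m : ι, t < s → ¬ Associated (f t n) (f s m) := by
    rintro t s n m hts ⟨u, hu⟩
    have h1 : y t * φ u = y s := by
      have := congrArg φ hu
      simpa [hspec, map_mul] using this
    obtain ⟨c, p, hc, hcase⟩ := hunit u u.isUnit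
    have hyt : (y t) ≠ 0 := fun h => hconst t (by simp [h])
    have hys : (y s) ≠ 0 := fun h => hconst s (by simp [h])
    have hcne : (Polynomial.C c : Polynomial S) ≠ 0 := by
      simpa using hc.ne_zero
    have hdts := hdeg t s hts
    rcases hcase with h | h
    · rw [h] at h1
      rcases Nat.eq_zero_or_pos p with hp | hp
      · subst hp
        rw [pow_zero, mul_one] at h1
        have : (y t * Polynomial.C c).natDegree = (y s).natDegree := by rw [h1]
        rw [Polynomial.natDegree_mul hyt hcne, Polynomial.natDegree_C] at this
        omega
      · have : (y s).coeff 0 = 0 := by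
          rw [← h1, ← mul_assoc, Polynomial.coeff_mul_X_pow']
          simp [Nat.not_le.mpr hp]
        exact hconst s this
    · have h2 : y t * Polynomial.C c = y s * Polynomial.X ^ p := by
        rw [← h, ← h1]; ring
      have := congrArg Polynomial.natDegree h2
      rw [Polynomial.natDegree_mul hyt hcne, Polynomial.natDegree_C,
        Polynomial.natDegree_mul hys (pow_ne_zero _ Polynomial.X_ne_zero),
        Polynomial.natDegree_X_pow] at this
      omega
  intro t s n m hne d hd1 hd2
  by_contra hdunit
  have assoc_of : ∀ (t' : ℕ) (n' : ι), d ∣ f t' n' → Associated d (f t' n') := by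
    rintro t' n' ⟨e, he⟩
    rcases (hirr t' n').isUnit_or_isUnit he with h | h
    · exact absurd h hdunit
    · exact ⟨h.unit, by simp [he]⟩
  have hass : Associated (f t n) (f s m) :=
    ((assoc_of t n hd1).symm.trans (assoc_of s m hd2))
  rcases lt_trichotomy t s with h | h | h
  · exact key t s n m h hass
  · subst h
    have hnm : n ≠ m := by
      intro hh; exact hne (by rw [hh])
    exact hvar t n m hnm hass
  · exact key s t m n h hass.symm
end
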